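/- Let (α_n, β_n)_{n≥0} be a stationary and ergodic sequence of pairs of non-negative random variables. If E[log α_0] < 0 and E[log⁺ β_0] < ∞, then the series ∑_{n=0}^∞ α_0·α_1···α_{n-1}·β_n converges almost surely. -/

import Mathlib

/-!
Truncating `log α` from below at `-K` makes it integrable and, for `K` large, keeps its mean
negative (monotone convergence); call the truncation `g` and pick `∫ g < a < 0`. For an ergodic
map the Birkhoff sums then satisfy `S_n g ≤ n a + C` almost surely: the set where the sums of
`g - a` are unbounded above is invariant, and if it had full measure a maximal-ergodic argument
would give `∫ (g - a) ≥ 0`. Hence `|α_0 ⋯ α_{n-1}| ≤ exp (S_n g) ≤ exp (C + n a)`. Since `log⁺ β`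
is integrable, Borel–Cantelli gives `|β_n| ≤ exp (-n a / 2)` eventually, so the terms are
eventually dominated by the convergent geometric series `exp C * exp (a / 2) ^ n`.
-/

open MeasureTheory Filter Finset
open scoped ENNReal

section BirkhoffSum

variable {Ω : Type*} {T : Ω → Ω} {f : Ω → ℝ}

theorem birkhoffSum_le_birkhoffSum_abs {m n : ℕ} (hmn : m ≤ n) (x : Ω) :
    birkhoffSum T f m x ≤ birkhoffSum T (fun y => |f y|) n x :=
  calc ∑ i ∈ range m, f (T^[i] x) ≤ ∑ i ∈ range m, |f (T^[i] x)| :=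
        sum_le_sum fun _ _ => le_abs_self _
    _ ≤ ∑ i ∈ range n, |f (T^[i] x)| :=
        sum_le_sum_of_subset_of_nonneg (range_mono hmn) fun _ _ _ => abs_nonneg _

theorem birkhoffSum_mono {g : Ω → ℝ} (hfg : f ≤ g) (n : ℕ) (x : Ω) :
    birkhoffSum T f n x ≤ birkhoffSum T g n x :=
  sum_le_sum fun _ _ => hfg _

theorem bddAbove_range_birkhoffSum_apply_iff (x : Ω) :
    BddAbove (Set.range fun n => birkhoffSum T f n (T x)) ↔
      BddAbove (Set.range fun n => birkhoffSum T f n x) := by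
  constructor
  · rintro ⟨C, hC⟩
    refine ⟨max 0 (f x + C), ?_⟩
    rintro _ ⟨_ | n, rfl⟩
    · simp
    · dsimp only
      rw [birkhoffSum_succ']
      exact le_max_of_le_right (by linarith [(hC ⟨n, rfl⟩ : birkhoffSum T f n (T x) ≤ C)])
  · rintro ⟨C, hC⟩
    refine ⟨C - f x, ?_⟩
    rintro _ ⟨n, rfl⟩
    have := hC ⟨n + 1, rfl⟩
    dsimp only at this ⊢
    rw [birkhoffSum_succ'] at this
    linarith

-- Cut the orbit into consecutive blocks of length at most `N` with nonnegative sums; the last,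
-- incomplete block is dominated by the sum of `|f|` over the next `N` points.
theorem birkhoffSum_add_birkhoffSum_abs_nonneg {N : ℕ}
    (H : ∀ x, ∃ m ∈ Ioc 0 N, 0 ≤ birkhoffSum T f m x) (L : ℕ) (x : Ω) :
    0 ≤ birkhoffSum T f L x + birkhoffSum T (fun y => |f y|) N (T^[L] x) := by
  induction L using Nat.strong_induction_on generalizing x with
  | _ L IH =>
    obtain ⟨m, hm, hSm⟩ := H x
    rw [mem_Ioc] at hm
    rcases le_or_gt m L with hmL | hLm
    · obtain ⟨k, rfl⟩ := Nat.exists_eq_add_of_le hmL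
      rw [birkhoffSum_add, add_comm m k, Function.iterate_add_apply]
      have := IH k (by omega) (T^[m] x)
      linarith
    · obtain ⟨k, rfl⟩ := Nat.exists_eq_add_of_le hLm.le
      rw [birkhoffSum_add] at hSm
      linarith [birkhoffSum_le_birkhoffSum_abs (T := T) (f := f) (by omega : k ≤ N) (T^[L] x)]

end BirkhoffSum

theorem Measurable.birkhoffSum {Ω M : Type*} [MeasurableSpace Ω] [MeasurableSpace M]
    [AddCommMonoid M] [MeasurableAdd₂ M] {T : Ω → Ω} {f : Ω → M} (hT : Measurable T)
    (hf : Measurable f) (n : ℕ) : Measurable (birkhoffSum T f n) :=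
  Finset.measurable_sum _ fun i _ => hf.comp (hT.iterate i)

namespace MeasureTheory.MeasurePreserving

variable {Ω : Type*} [MeasurableSpace Ω] {μ : Measure Ω} {T : Ω → Ω} {f : Ω → ℝ}

theorem integral_comp_of_aestronglyMeasurable
    (hT : MeasurePreserving T μ μ) (hf : AEStronglyMeasurable f μ) :
    ∫ x, f (T x) ∂μ = ∫ x, f x ∂μ := by
  rw [← hT.map_eq] at hf
  rw [← integral_map hT.aemeasurable hf, hT.map_eq]

theorem integrable_birkhoffSum (hT : MeasurePreserving T μ μ)
    (hf : Integrable f μ) (n : ℕ) : Integrable (birkhoffSum T f n) μ :=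
  integrable_finsetSum _ fun i _ => (hT.iterate i).integrable_comp_of_integrable hf

theorem integral_birkhoffSum (hT : MeasurePreserving T μ μ)
    (hf : Integrable f μ) (n : ℕ) :
    ∫ x, birkhoffSum T f n x ∂μ = n * ∫ x, f x ∂μ := by
  simp only [birkhoffSum]
  rw [integral_finsetSum (f := fun i x => f (T^[i] x)) _
    fun i _ => (hT.iterate i).integrable_comp_of_integrable hf]
  simp [(hT.iterate _).integral_comp_of_aestronglyMeasurable hf.1]

theorem integral_nonneg_of_forall_exists_birkhoffSum_nonneg
    (hT : MeasurePreserving T μ μ) (hf : Integrable f μ) {N : ℕ}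
    (H : ∀ x, ∃ m ∈ Ioc 0 N, 0 ≤ birkhoffSum T f m x) : 0 ≤ ∫ x, f x ∂μ := by
  have key (L : ℕ) : 0 ≤ L * ∫ x, f x ∂μ + N * ∫ x, |f x| ∂μ := by
    have hint := hT.integrable_birkhoffSum hf.abs N
    calc (0 : ℝ) ≤ ∫ x, birkhoffSum T f L x + birkhoffSum T (fun y => |f y|) N (T^[L] x) ∂μ :=
          integral_nonneg (birkhoffSum_add_birkhoffSum_abs_nonneg H L)
      _ = _ := by
          rw [integral_add (g := fun x => birkhoffSum T (fun y => |f y|) N (T^[L] x))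
              (hT.integrable_birkhoffSum hf L)
              ((hT.iterate L).integrable_comp_of_integrable hint),
            (hT.iterate L).integral_comp_of_aestronglyMeasurable hint.1,
            hT.integral_birkhoffSum hf, hT.integral_birkhoffSum hf.abs]
  by_contra! hneg
  obtain ⟨L, hL⟩ := exists_nat_gt ((N * ∫ x, |f x| ∂μ) / -∫ x, f x ∂μ)
  rw [div_lt_iff₀ (neg_pos.2 hneg)] at hL
  linarith [key L]

theorem integral_nonneg_of_ae_exists_birkhoffSum_nonneg
    (hT : MeasurePreserving T μ μ) (hfm : Measurable f) (hf : Integrable f μ)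
    (H : ∀ᵐ x ∂μ, ∃ n, 0 < n ∧ 0 ≤ birkhoffSum T f n x) : 0 ≤ ∫ x, f x ∂μ := by
  set E : ℕ → Set Ω := fun N => {x | ∀ n ∈ Ioc 0 N, birkhoffSum T f n x < 0} with hE
  have hEm (N : ℕ) : MeasurableSet (E N) := by
    simp only [hE, Set.ofPred_forall]
    exact .iInter fun n => .iInter fun _ =>
      measurableSet_lt (hT.measurable.birkhoffSum hfm n) measurable_const
  -- Adding `|f|` on `E N` puts a nonnegative sum within `N` steps of every point.
  have hperturbed {N : ℕ} (hN : 0 < N) : 0 ≤ ∫ x, f x ∂μ + ∫ x in E N, |f x| ∂μ := by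
    set g := fun x => f x + (E N).indicator (fun y => |f y|) x
    have hfg : f ≤ g := fun x =>
      le_add_of_nonneg_right (Set.indicator_nonneg (fun _ _ => abs_nonneg _) x)
    have hg : Integrable g μ := hf.add (hf.abs.indicator (hEm N))
    rw [← integral_indicator (hEm N), ← integral_add hf (hf.abs.indicator (hEm N))]
    refine integral_nonneg_of_forall_exists_birkhoffSum_nonneg (N := N) hT hg fun x => ?_
    by_cases hx : x ∈ E N
    · refine ⟨1, mem_Ioc.2 ⟨one_pos, hN⟩, ?_⟩
      simp only [birkhoffSum_one, Set.indicator_of_mem hx]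
      linarith [neg_abs_le (f x)]
    · simp only [hE, Set.mem_ofPred_eq, not_forall, not_lt] at hx
      obtain ⟨n, hn, hSn⟩ := hx
      exact ⟨n, hn, hSn.trans (birkhoffSum_mono hfg n x)⟩
  have hE_anti : Antitone E := fun N N' hNN' x hx n hn =>
    hx n (mem_Ioc.2 ⟨(mem_Ioc.1 hn).1, (mem_Ioc.1 hn).2.trans hNN'⟩)
  have hE_null : μ (⋂ N, E N) = 0 := by
    refine measure_mono_null (fun x hx => ?_) (ae_iff.1 H)
    simp only [Set.mem_iInter, hE, Set.mem_ofPred_eq] at hx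
    rintro ⟨n, hn, hSn⟩
    exact (hx n n (mem_Ioc.2 ⟨hn, le_rfl⟩)).not_ge hSn
  have hlim : Tendsto (fun N => ∫ x, f x ∂μ + ∫ x in E N, |f x| ∂μ) atTop
      (nhds (∫ x, f x ∂μ)) := by
    have := tendsto_setIntegral_of_antitone hEm hE_anti ⟨0, hf.abs.integrableOn⟩
    rw [setIntegral_measure_zero _ hE_null] at this
    simpa using this.const_add (∫ x, f x ∂μ)
  exact ge_of_tendsto hlim (eventually_atTop.2 ⟨1, fun N hN => hperturbed hN⟩)

end MeasureTheory.MeasurePreserving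

namespace Ergodic

variable {Ω : Type*} [MeasurableSpace Ω] {μ : Measure Ω} {T : Ω → Ω} {f : Ω → ℝ}

theorem ae_bddAbove_birkhoffSum (hT : Ergodic T μ) (hfm : Measurable f)
    (hf : Integrable f μ) (hneg : ∫ x, f x ∂μ < 0) :
    ∀ᵐ x ∂μ, BddAbove (Set.range fun n => birkhoffSum T f n x) := by
  have hB : MeasurableSet {x | BddAbove (Set.range fun n => birkhoffSum T f n x)} :=
    measurableSet_bddAbove_range (hT.measurable.birkhoffSum hfm)
  have hB_inv : T ⁻¹' {x | BddAbove (Set.range fun n => birkhoffSum T f n x)} =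
      {x | BddAbove (Set.range fun n => birkhoffSum T f n x)} :=
    Set.ext bddAbove_range_birkhoffSum_apply_iff
  refine (hT.ae_mem_or_ae_notMem hB hB_inv).resolve_right fun hunbdd => hneg.not_ge ?_
  refine hT.toMeasurePreserving.integral_nonneg_of_ae_exists_birkhoffSum_nonneg hfm hf ?_
  filter_upwards [hunbdd] with x hx
  obtain ⟨_, ⟨n, rfl⟩, hn⟩ := not_bddAbove_iff.1 hx 0
  refine ⟨n, Nat.pos_of_ne_zero ?_, hn.le⟩
  rintro rfl
  simp at hn

theorem ae_exists_birkhoffSum_le [IsProbabilityMeasure μ] (hT : Ergodic T μ)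
    (hfm : Measurable f) (hf : Integrable f μ) {a : ℝ} (ha : ∫ x, f x ∂μ < a) :
    ∀ᵐ x ∂μ, ∃ C, ∀ n : ℕ, birkhoffSum T f n x ≤ n * a + C := by
  have hneg : ∫ x, f x - a ∂μ < 0 := by
    rw [integral_sub hf (integrable_const a)]
    simpa using ha
  filter_upwards [hT.ae_bddAbove_birkhoffSum (hfm.sub measurable_const)
    (hf.sub (integrable_const a)) hneg] with x ⟨C, hC⟩
  refine ⟨C, fun n => ?_⟩
  have hconst : birkhoffSum T (fun _ => a) n x = n * a := by simp [birkhoffSum]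
  have := hC ⟨n, rfl⟩
  dsimp only at this
  rw [birkhoffSum_sub, hconst] at this
  linarith

end Ergodic

theorem exists_integrable_max_integral_neg {Ω : Type*} [MeasurableSpace Ω] {μ : Measure Ω}
    [IsFiniteMeasure μ] {φ : Ω → ℝ} (hφ : Measurable φ)
    (h : ∫⁻ x, ENNReal.ofReal (φ x) ∂μ < ∫⁻ x, ENNReal.ofReal (-φ x) ∂μ) :
    ∃ K : ℕ, Integrable (fun x => max (φ x) (-K)) μ ∧ ∫ x, max (φ x) (-K) ∂μ < 0 := by
  have hpos (K : ℕ) (x : Ω) : ENNReal.ofReal (max (φ x) (-K)) = ENNReal.ofReal (φ x) := by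
    rw [ENNReal.ofReal_max, ENNReal.ofReal_of_nonpos (neg_nonpos.2 K.cast_nonneg),
      max_eq_left (zero_le ..)]
  have hneg_le_iSup : ∫⁻ x, ENNReal.ofReal (-φ x) ∂μ ≤
      ⨆ K : ℕ, ∫⁻ x, ENNReal.ofReal (-max (φ x) (-K)) ∂μ := by
    rw [← lintegral_iSup (f := fun (K : ℕ) x => ENNReal.ofReal (-max (φ x) (-K)))
      (fun K => (hφ.max measurable_const).neg.ennreal_ofReal)
      fun K K' hKK' x => ENNReal.ofReal_le_ofReal (neg_le_neg (max_le_max_left _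
        (neg_le_neg (Nat.cast_le.2 hKK'))))]
    refine lintegral_mono fun x => ?_
    obtain ⟨K, hK⟩ := exists_nat_ge (-φ x)
    exact le_iSup_of_le K (by rw [max_eq_left (by linarith)])
  obtain ⟨K, hK⟩ := lt_iSup_iff.1 (h.trans_le hneg_le_iSup)
  have hφ_pos : Integrable (fun x => (ENNReal.ofReal (φ x)).toReal) μ :=
    integrable_toReal_of_lintegral_ne_top hφ.ennreal_ofReal.aemeasurable h.ne_top
  have hint : Integrable (fun x => max (φ x) (-K)) μ := by
    refine (hφ_pos.add (integrable_const (K : ℝ))).mono'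
      (hφ.max measurable_const).aestronglyMeasurable (.of_forall fun x => ?_)
    simp only [Pi.add_apply, ENNReal.toReal_ofReal', Real.norm_eq_abs, abs_le]
    constructor <;> cases max_cases (φ x) (-K) <;> cases max_cases (φ x) 0 <;> linarith
  refine ⟨K, hint, ?_⟩
  rw [integral_eq_lintegral_pos_part_sub_lintegral_neg_part hint, sub_neg]
  simp only [hpos]
  exact ENNReal.toReal_strict_mono hint.neg.lintegral_lt_top.ne hK

theorem MeasureTheory.MeasurePreserving.ae_eventually_le_mul {Ω : Type*} [MeasurableSpace Ω]
    {μ : Measure Ω} [IsProbabilityMeasure μ] {T : Ω → Ω} (hT : MeasurePreserving T μ μ)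
    {Y : Ω → ℝ} (hY : Integrable Y μ) {ε : ℝ} (hε : 0 < ε) :
    ∀ᵐ x ∂μ, ∀ᶠ n : ℕ in atTop, Y (T^[n] x) ≤ ε * n := by
  let _ : MeasureSpace Ω := ⟨μ⟩
  have hsum : ∑' n : ℕ, μ {x | |Y x| / ε ∈ Set.Ioi (n : ℝ)} < ∞ :=
    ProbabilityTheory.tsum_prob_mem_Ioi_lt_top (hY.abs.div_const ε)
      fun x => div_nonneg (abs_nonneg _) hε.le
  have hle (n : ℕ) :
      μ (T^[n] ⁻¹' {x | ε * n < Y x}) ≤ μ {x | |Y x| / ε ∈ Set.Ioi (n : ℝ)} := by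
    rw [(hT.iterate n).measure_preimage (nullMeasurableSet_lt aemeasurable_const hY.aemeasurable)]
    refine measure_mono fun x (hx : ε * n < Y x) => ?_
    rw [Set.mem_ofPred_eq, Set.mem_Ioi, lt_div_iff₀ hε]
    linarith [le_abs_self (Y x)]
  filter_upwards [ae_eventually_notMem (ne_top_of_le_ne_top hsum.ne (ENNReal.tsum_le_tsum hle))]
    with x hx
  exact hx.mono fun n hn => not_lt.1 hn

theorem Real.abs_le_exp_log (x : ℝ) : |x| ≤ Real.exp (Real.log x) := by
  rcases eq_or_ne x 0 with rfl | hx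
  · simp
  · rw [Real.exp_log_eq_abs hx]

theorem prod_abs_le_exp_birkhoffSum {Ω : Type*} {T : Ω → Ω} {φ g : Ω → ℝ}
    (h : ∀ x, |φ x| ≤ Real.exp (g x)) (n : ℕ) (x : Ω) :
    ∏ i ∈ range n, |φ (T^[i] x)| ≤ Real.exp (birkhoffSum T g n x) := by
  rw [birkhoffSum, Real.exp_sum]
  exact prod_le_prod (fun _ _ => abs_nonneg _) fun i _ => h _

theorem summable_prod_mul_of_birkhoffSum_le {Ω : Type*} {T : Ω → Ω} {α β g : Ω → ℝ} {x : Ω}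
    {a C : ℝ} (ha : a < 0) (hα : ∀ y, |α y| ≤ Real.exp (g y))
    (hS : ∀ n : ℕ, birkhoffSum T g n x ≤ n * a + C)
    (hβ : ∀ᶠ n : ℕ in atTop, |β (T^[n] x)| ≤ Real.exp (-a / 2 * n)) :
    Summable fun n => (∏ i ∈ range n, α (T^[i] x)) * β (T^[n] x) := by
  have hq : Real.exp (a / 2) < 1 := Real.exp_lt_one_iff.2 (by linarith)
  refine Summable.of_norm_bounded_eventually_nat
    ((summable_geometric_of_lt_one (Real.exp_nonneg _) hq).mul_left (Real.exp C)) ?_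
  filter_upwards [hβ] with n hβn
  calc ‖(∏ i ∈ range n, α (T^[i] x)) * β (T^[n] x)‖
      = (∏ i ∈ range n, |α (T^[i] x)|) * |β (T^[n] x)| := by
        rw [norm_mul, norm_prod]; rfl
    _ ≤ Real.exp (n * a + C) * Real.exp (-a / 2 * n) := by
        gcongr
        exact (prod_abs_le_exp_birkhoffSum hα n x).trans (Real.exp_le_exp.2 (hS n))
    _ = Real.exp C * Real.exp (a / 2) ^ n := by
        rw [← Real.exp_nat_mul, ← Real.exp_add, ← Real.exp_add]
        ring_nf

theorem ergodic_series_converges_general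
    {Ω : Type*} [MeasurableSpace Ω] {μ : Measure Ω} [IsProbabilityMeasure μ]
    (T : Ω → Ω) (hT : Ergodic T μ)
    (α β : Ω → ℝ) (hα_meas : Measurable α) (hβ_meas : Measurable β)
    (hlogα : ∫⁻ ω, ENNReal.ofReal (Real.log (α ω)) ∂μ
      < ∫⁻ ω, ENNReal.ofReal (-Real.log (α ω)) ∂μ)
    (hlogβ : ∫⁻ ω, ENNReal.ofReal (Real.log (β ω)) ∂μ < ⊤) :
    ∀ᵐ ω ∂μ, Summable fun n : ℕ =>
      (∏ i ∈ Finset.range n, α (T^[i] ω)) * β (T^[n] ω) := by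
  obtain ⟨K, hg_int, hg_neg⟩ := exists_integrable_max_integral_neg
    (φ := fun ω => Real.log (α ω)) (Real.measurable_log.comp hα_meas) hlogα
  set g := fun ω => max (Real.log (α ω)) (-K)
  have hg_meas : Measurable g := (Real.measurable_log.comp hα_meas).max measurable_const
  have hα_le (ω : Ω) : |α ω| ≤ Real.exp (g ω) :=
    (Real.abs_le_exp_log _).trans (Real.exp_le_exp.2 (le_max_left _ _))
  obtain ⟨a, hga, ha⟩ := exists_between hg_neg
  have hlogβ_int : Integrable (fun ω => (ENNReal.ofReal (Real.log (β ω))).toReal) μ :=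
    integrable_toReal_of_lintegral_ne_top
      (Real.measurable_log.comp hβ_meas).ennreal_ofReal.aemeasurable hlogβ.ne
  filter_upwards [hT.ae_exists_birkhoffSum_le hg_meas hg_int hga,
    hT.toMeasurePreserving.ae_eventually_le_mul hlogβ_int (by linarith : 0 < -a / 2)]
    with ω ⟨C, hC⟩ hβ
  refine summable_prod_mul_of_birkhoffSum_le ha hα_le hC (hβ.mono fun n hn => ?_)
  exact (Real.abs_le_exp_log _).trans (Real.exp_le_exp.2 ((le_max_left _ 0).trans
    (by simpa [ENNReal.toReal_ofReal'] using hn)))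

/-- **Ergodic series lemma (direct part).**
Let `(α_n, β_n)_{n ≥ 0}` be a stationary ergodic sequence of pairs of nonnegative random
variables, realized as `α_n = α ∘ T^n`, `β_n = β ∘ T^n` for an ergodic measure-preserving
shift `T`.  If `E[log α_0] < 0` (possibly `-∞`, expressed as
`∫⁻ log⁺ α_0 < ∫⁻ log⁻ α_0`, which forces the positive part to be finite) and
`E[log⁺ β_0] < ∞`, then `∑_{n≥0} α_0 α_1 ⋯ α_{n-1} β_n < ∞` almost surely. -/
theorem ergodic_series_converges
    {Ω : Type*} [MeasurableSpace Ω] {μ : Measure Ω} [IsProbabilityMeasure μ]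
    (T : Ω → Ω) (hT : Ergodic T μ)
    (α β : Ω → ℝ) (hα_meas : Measurable α) (hβ_meas : Measurable β)
    (hα_nonneg : ∀ ω, 0 ≤ α ω) (hβ_nonneg : ∀ ω, 0 ≤ β ω)
    (hlogα : ∫⁻ ω, ENNReal.ofReal (Real.log (α ω)) ∂μ
      < ∫⁻ ω, ENNReal.ofReal (-Real.log (α ω)) ∂μ)
    (hlogβ : ∫⁻ ω, ENNReal.ofReal (Real.log (β ω)) ∂μ < ⊤) :
    ∀ᵐ ω ∂μ, Summable fun n : ℕ =>
      (∏ i ∈ Finset.range n, α (T^[i] ω)) * β (T^[n] ω) :=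
  ergodic_series_converges_general T hT α β hα_meas hβ_meas hlogα hlogβ
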